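/- arXiv:2505.13760 — 4 statements merged into one kernel-verified Lean document; each statement's English description precedes it below -/
import Mathlib

section
/- Let f₁, f₂ : ℝ^d → ℝ be convex functions such that the argmin set of each is nonempty and compact. Then the argmin set of f₁ + f₂ is nonempty and compact. -/
/-!
Let `x₀` minimize a convex continuous `f` whose argmin lies in the ball of radius `R` around `x₀`.
On the compact sphere of radius `ρ > R` around `x₀`, `f` exceeds `f x₀` by some `a > 0`, and
convexity along rays from `x₀` turns this into the linear growth
`a * ‖x - x₀‖ ≤ ρ * (f x - f x₀)` outside that sphere, so every sublevel set of `f` is bounded.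
For `f₁ + f₂`, the sublevel sets lie in sublevel sets of `f₁` because `f₂` is bounded below,
and a continuous function with a bounded nonempty sublevel set has a nonempty compact argmin.
-/

open Set Metric Bornology

section ConvexGrowth

variable {E : Type*} [NormedAddCommGroup E] [NormedSpace ℝ E] {f : E → ℝ}

lemma ConvexOn.le_add_smul_sub (hf : ConvexOn ℝ univ f) (x₀ x : E) {t : ℝ}
    (ht₀ : 0 ≤ t) (ht₁ : t ≤ 1) :
    f (x₀ + t • (x - x₀)) ≤ f x₀ + t * (f x - f x₀) := by
  have h := hf.2 (mem_univ x₀) (mem_univ x) (sub_nonneg.2 ht₁) ht₀ (sub_add_cancel 1 t)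
  have hx : (1 - t) • x₀ + t • x = x₀ + t • (x - x₀) := by module
  rw [hx, smul_eq_mul, smul_eq_mul] at h
  linarith

lemma ConvexOn.mul_norm_sub_le_of_forall_sphere (hf : ConvexOn ℝ univ f) {x₀ x : E} {ρ a : ℝ}
    (hρ : 0 < ρ) (ha : ∀ y ∈ sphere x₀ ρ, f x₀ + a ≤ f y) (hx : ρ ≤ ‖x - x₀‖) :
    a * ‖x - x₀‖ ≤ ρ * (f x - f x₀) := by
  set r := ‖x - x₀‖
  have hr : 0 < r := hρ.trans_le hx
  have hy : x₀ + (ρ / r) • (x - x₀) ∈ sphere x₀ ρ := by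
    rw [mem_sphere_iff_norm, add_sub_cancel_left, norm_smul, Real.norm_of_nonneg (by positivity),
      div_mul_cancel₀ _ hr.ne']
  have hle : a ≤ ρ / r * (f x - f x₀) := by
    linarith [(ha _ hy).trans (hf.le_add_smul_sub x₀ x (by positivity) ((div_le_one hr).2 hx))]
  calc a * r ≤ ρ / r * (f x - f x₀) * r := mul_le_mul_of_nonneg_right hle hr.le
    _ = ρ * (f x - f x₀) := by field_simp

lemma ConvexOn.isBounded_setOf_le_of_isBounded_argmin [ProperSpace E] (hf : ConvexOn ℝ univ f)
    (hc : Continuous f) {x₀ : E} (hx₀ : ∀ y, f x₀ ≤ f y)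
    (hb : IsBounded {x | ∀ y, f x ≤ f y}) (c : ℝ) :
    IsBounded {x | f x ≤ c} := by
  obtain ⟨R, hR⟩ := (isBounded_iff_subset_closedBall x₀).1 hb
  set ρ := |R| + 1
  have hρ : 0 < ρ := by positivity
  have hsphere : ∀ y ∈ sphere x₀ ρ, f x₀ < f y := by
    intro y hy
    by_contra! hle
    have hyR : dist y x₀ ≤ R := hR fun z => hle.trans (hx₀ z)
    rw [mem_sphere.1 hy] at hyR
    linarith [le_abs_self R]
  obtain ⟨m, hm, hmf⟩ := (isCompact_sphere x₀ ρ).exists_forall_le' hc.continuousOn hsphere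
  refine (isBounded_iff_subset_closedBall x₀).2
    ⟨max ρ (ρ * (c - f x₀) / (m - f x₀)), fun x hx => ?_⟩
  rw [mem_closedBall, dist_eq_norm]
  rcases le_total ρ ‖x - x₀‖ with hfar | hnear
  · have hgrowth := hf.mul_norm_sub_le_of_forall_sphere (a := m - f x₀) hρ
      (fun y hy => by linarith [hmf y hy]) hfar
    have hxc : ρ * (f x - f x₀) ≤ ρ * (c - f x₀) := by gcongr; exact hx
    exact le_max_of_le_right ((le_div_iff₀ (sub_pos.2 hm)).2 (by linarith))
  · exact le_max_of_le_left hnear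

end ConvexGrowth

lemma Continuous.argmin_nonempty_and_isCompact {α : Type*} [PseudoMetricSpace α] [ProperSpace α]
    {f : α → ℝ} (hf : Continuous f) (x₀ : α) (hb : IsBounded {x | f x ≤ f x₀}) :
    {x | ∀ y, f x ≤ f y}.Nonempty ∧ IsCompact {x | ∀ y, f x ≤ f y} := by
  have hK : IsCompact {x | f x ≤ f x₀} :=
    isCompact_of_isClosed_isBounded (isClosed_le hf continuous_const) hb
  obtain ⟨z, -, hz⟩ := hK.exists_isMinOn ⟨x₀, le_refl (f x₀)⟩ hf.continuousOn
  have hclosed : IsClosed {x | ∀ y, f x ≤ f y} := by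
    rw [ofPred_forall]
    exact isClosed_iInter fun y => isClosed_le hf continuous_const
  refine ⟨⟨z, fun y => ?_⟩, hK.of_isClosed_subset hclosed fun x hx => hx x₀⟩
  rcases le_total (f y) (f x₀) with hy | hy
  exacts [hz hy, (hz (le_refl (f x₀))).trans hy]

/-- If two convex functions on ℝ^d each have nonempty compact argmin sets, then so does
their sum. -/
theorem argmin_add_compact_nonempty (d : ℕ)
    (f₁ f₂ : EuclideanSpace ℝ (Fin d) → ℝ)
    (h₁ : ConvexOn ℝ Set.univ f₁) (h₂ : ConvexOn ℝ Set.univ f₂)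
    (hS₁ : {x | ∀ y, f₁ x ≤ f₁ y}.Nonempty ∧ IsCompact {x | ∀ y, f₁ x ≤ f₁ y})
    (hS₂ : {x | ∀ y, f₂ x ≤ f₂ y}.Nonempty ∧ IsCompact {x | ∀ y, f₂ x ≤ f₂ y}) :
    {x | ∀ y, f₁ x + f₂ x ≤ f₁ y + f₂ y}.Nonempty ∧
      IsCompact {x | ∀ y, f₁ x + f₂ x ≤ f₁ y + f₂ y} := by
  obtain ⟨⟨x₁, hx₁⟩, hK₁⟩ := hS₁
  obtain ⟨⟨x₂, hx₂ : ∀ y, f₂ x₂ ≤ f₂ y⟩, -⟩ := hS₂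
  have hc₁ : Continuous f₁ := continuousOn_univ.1 (h₁.continuousOn isOpen_univ)
  have hc₂ : Continuous f₂ := continuousOn_univ.1 (h₂.continuousOn isOpen_univ)
  have hsub : {x | f₁ x + f₂ x ≤ f₁ x₁ + f₂ x₁} ⊆ {x | f₁ x ≤ f₁ x₁ + f₂ x₁ - f₂ x₂} :=
    fun x (hx : f₁ x + f₂ x ≤ f₁ x₁ + f₂ x₁) => show f₁ x ≤ _ by linarith [hx₂ x]
  exact (hc₁.add hc₂).argmin_nonempty_and_isCompact x₁
    ((h₁.isBounded_setOf_le_of_isBounded_argmin hc₁ hx₁ hK₁.isBounded _).subset hsub)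
end

section
/- Let γ : Δ_n → (finite subsets of R) be given by γ(p) = argmin_{r ∈ R} ⟨p, ℓ(r)⟩ for a finite report set R and loss ℓ : R → ℝ^n. Let C ⊆ Δ_n be a convex set such that γ(p) ∩ γ(p') ≠ ∅ for all p, p' ∈ C, and let p_m ∈ C have minimal |γ(p_m)| among points of C. Then γ(p_m) ⊆ γ(p) for every p ∈ C. -/
/-- If C ⊆ Δ_n is convex, γ-values of any two points of C intersect, and p_m ∈ C has
minimal cardinality |γ(p_m)| among points of C, then γ(p_m) ⊆ γ(p) for all p ∈ C. -/
theorem gamma_min_card_subset (n : ℕ) (R : Type*) [Fintype R] [Nonempty R]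
    (ℓ : R → Fin n → ℝ)
    (γ : (Fin n → ℝ) → Set R)
    (hγ : ∀ p, γ p = {r | ∀ r', ∑ y, p y * ℓ r y ≤ ∑ y, p y * ℓ r' y})
    (C : Set (Fin n → ℝ)) (hCsub : C ⊆ stdSimplex ℝ (Fin n)) (hCconv : Convex ℝ C)
    (hinter : ∀ p ∈ C, ∀ p' ∈ C, (γ p ∩ γ p').Nonempty)
    (pm : Fin n → ℝ) (hpm : pm ∈ C)
    (hmin : ∀ p ∈ C, (γ pm).ncard ≤ (γ p).ncard) :
    ∀ p ∈ C, γ pm ⊆ γ p := by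
  intro p hp
  set q : Fin n → ℝ := (1/2 : ℝ) • pm + (1/2 : ℝ) • p with hq
  have hqC : q ∈ C := hCconv hpm hp (by norm_num) (by norm_num) (by norm_num)
  obtain ⟨s, hs1, hs2⟩ := hinter pm hpm p hp
  rw [hγ] at hs1 hs2
  have expand : ∀ x : R, ∑ y, q y * ℓ x y
      = (1/2) * (∑ y, pm y * ℓ x y) + (1/2) * (∑ y, p y * ℓ x y) := by
    intro x
    rw [Finset.mul_sum, Finset.mul_sum, ← Finset.sum_add_distrib]
    refine Finset.sum_congr rfl fun y _ => ?_
    simp [hq]; ring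
  have hsub : γ q ⊆ γ pm ∩ γ p := by
    intro r hr
    rw [hγ] at hr
    have hA := hr s
    rw [expand r, expand s] at hA
    have hB := hs1 r
    have hCc := hs2 r
    have h1 : ∑ y, pm y * ℓ r y = ∑ y, pm y * ℓ s y := by linarith
    have h2 : ∑ y, p y * ℓ r y = ∑ y, p y * ℓ s y := by linarith
    constructor
    · rw [hγ]; intro r''; rw [h1]; exact hs1 r''
    · rw [hγ]; intro r''; rw [h2]; exact hs2 r''
  have hsub' : γ q ⊆ γ pm := hsub.trans Set.inter_subset_left
  have heq : γ q = γ pm :=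
    Set.eq_of_subset_of_ncard_le hsub' (hmin q hqC) (Set.toFinite _)
  rw [← heq]
  exact hsub.trans Set.inter_subset_right
end

section
/- Let L : ℝ^d → ℝ^n be a surrogate with convex differentiable components eliciting Γ, and ℓ : R → ℝ^n a finite target eliciting γ. Then L indirectly elicits ℓ (i.e., for every u ∈ ℝ^d there is r ∈ R with Γ_u ⊆ γ_r) if and only if for every u ∈ ℝ^d and all p, p' ∈ Γ_u, γ(p) ∩ γ(p') ≠ ∅. -/
/-- For a surrogate L with convex differentiable components and a finite target ℓ,
L indirectly elicits ℓ iff for every u and all p, p' in the level set Γ_u,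
γ(p) ∩ γ(p') ≠ ∅. -/
theorem IE_iff_pairwise_intersect (d n : ℕ) (R : Type*) [Fintype R] [Nonempty R]
    (L : EuclideanSpace ℝ (Fin d) → Fin n → ℝ)
    (hconv : ∀ y, ConvexOn ℝ Set.univ (fun u => L u y))
    (hdiff : ∀ y, Differentiable ℝ (fun u => L u y))
    (ℓ : R → Fin n → ℝ)
    (γ : (Fin n → ℝ) → Set R)
    (hγ : ∀ p, γ p = {r | ∀ r', ∑ y, p y * ℓ r y ≤ ∑ y, p y * ℓ r' y})
    (Γlev : EuclideanSpace ℝ (Fin d) → Set (Fin n → ℝ))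
    (hΓ : ∀ u, Γlev u = {p | p ∈ stdSimplex ℝ (Fin n) ∧
      ∀ v, ∑ y, p y * L u y ≤ ∑ y, p y * L v y}) :
    (∀ u, ∃ r : R, Γlev u ⊆ {p | r ∈ γ p}) ↔
      (∀ u, ∀ p ∈ Γlev u, ∀ p' ∈ Γlev u, (γ p ∩ γ p').Nonempty) := by
  classical
  set f : (Fin n → ℝ) → R → ℝ := fun p r => ∑ y, p y * ℓ r y with hf
  have hmemγ : ∀ p r, r ∈ γ p ↔ ∀ r', f p r ≤ f p r' := by
    intro p r; rw [hγ]; rfl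
  constructor
  · rintro h u p hp p' hp'
    obtain ⟨r, hr⟩ := h u
    exact ⟨r, hr hp, hr hp'⟩
  · intro h u
    by_cases hne : (Γlev u).Nonempty
    swap
    · obtain ⟨r⟩ := ‹Nonempty R›
      exact ⟨r, fun p hp => absurd ⟨p, hp⟩ hne⟩
    -- γ p is always nonempty
    have hγne : ∀ p, (γ p).Nonempty := by
      intro p
      obtain ⟨m, _, hm⟩ := Finset.exists_min_image Finset.univ (f p)
        ⟨Classical.arbitrary R, Finset.mem_univ _⟩
      exact ⟨m, (hmemγ p m).2 fun r' => hm r' (Finset.mem_univ _)⟩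
    -- linearity of f in p
    have hlin : ∀ (p q : Fin n → ℝ) (t : ℝ) (r : R),
        f (fun y => (1 - t) * p y + t * q y) r = (1 - t) * f p r + t * f q r := by
      intro p q t r
      simp only [hf, Finset.mul_sum, ← Finset.sum_add_distrib]
      exact Finset.sum_congr rfl fun y _ => by ring
    -- convexity of Γlev u
    have hconvΓ : ∀ p ∈ Γlev u, ∀ q ∈ Γlev u, ∀ t : ℝ, 0 ≤ t → t ≤ 1 →
        (fun y => (1 - t) * p y + t * q y) ∈ Γlev u := by
      intro p hp q hq t ht0 ht1
      rw [hΓ] at hp hq ⊢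
      obtain ⟨hps, hpm⟩ := hp
      obtain ⟨hqs, hqm⟩ := hq
      constructor
      · have h2 : (fun y => (1 - t) * p y + t * q y) = (1 - t) • p + t • q := by
          funext y; simp [Pi.smul_apply, smul_eq_mul]
        rw [h2]
        exact (convex_stdSimplex ℝ (Fin n)) hps hqs (by linarith) ht0 (by ring)
      · intro v
        have h1 : ∀ (w : EuclideanSpace ℝ (Fin d)),
            ∑ y, ((1 - t) * p y + t * q y) * L w y
              = (1 - t) * ∑ y, p y * L w y + t * ∑ y, q y * L w y := by
          intro w
          simp only [Finset.mul_sum, ← Finset.sum_add_distrib]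
          exact Finset.sum_congr rfl fun y _ => by ring
        rw [h1, h1]
        have := hpm v
        have := hqm v
        nlinarith [hpm v, hqm v]
    -- pick p0 in Γlev u with minimal (γ p0).ncard
    obtain ⟨pw, hpw⟩ := hne
    have hSne : {k | ∃ p ∈ Γlev u, (γ p).ncard = k}.Nonempty := ⟨_, pw, hpw, rfl⟩
    obtain ⟨p0, hp0Γ, hp0k⟩ := Nat.sInf_mem hSne
    obtain ⟨s, hs⟩ := hγne p0
    refine ⟨s, fun p hpΓ => ?_⟩
    obtain ⟨r, hrp0, hrp⟩ := h u p0 hp0Γ p hpΓ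
    -- find t ∈ (0,1) with γ (segment point) ⊆ γ p0
    have key : ∃ t : ℝ, 0 < t ∧ t < 1 ∧
        γ (fun y => (1 - t) * p0 y + t * p y) ⊆ γ p0 := by
      set bad : Finset R := Finset.univ.filter (fun r' => r' ∉ γ p0) with hbaddef
      by_cases hbad : bad.Nonempty
      · set ε : ℝ := bad.inf' hbad (fun r' => f p0 r' - f p0 s) with hεdef
        set C : ℝ := bad.sup' hbad (fun r' => |f p r' - f p s|) with hCdef
        have hA : ∀ r' ∈ bad, 0 < f p0 r' - f p0 s := by
          intro r' hr'
          have hnot : r' ∉ γ p0 := (Finset.mem_filter.1 hr').2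
          rw [hmemγ] at hnot
          push_neg at hnot
          obtain ⟨r'', hr''⟩ := hnot
          have := (hmemγ p0 s).1 hs r''
          linarith
        have hε : 0 < ε := by
          obtain ⟨r0, hr0, hr0e⟩ := Finset.exists_mem_eq_inf' hbad
            (fun r' => f p0 r' - f p0 s)
          rw [hεdef, hr0e]; exact hA r0 hr0
        have hC : 0 ≤ C := by
          obtain ⟨r0, hr0⟩ := hbad
          rw [hCdef]
          exact le_trans (abs_nonneg _) (Finset.le_sup' (fun r'' => |f p r'' - f p s|) hr0)
        refine ⟨ε / (2 * (ε + C + 1)), by positivity, ?_, ?_⟩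
        · rw [div_lt_one (by positivity)]; linarith
        · set t : ℝ := ε / (2 * (ε + C + 1)) with htdef
          have ht0 : 0 < t := by positivity
          have ht1 : t < 1 := by rw [htdef, div_lt_one (by positivity)]; linarith
          have htD : t * (2 * (ε + C + 1)) = ε := by
            rw [htdef]; field_simp
          intro r' hr'q
          by_contra hr'bad
          have hr'mem : r' ∈ bad := Finset.mem_filter.2 ⟨Finset.mem_univ _, hr'bad⟩
          have hεle : ε ≤ f p0 r' - f p0 s := Finset.inf'_le _ hr'mem
          have hCge : |f p r' - f p s| ≤ C := by
            rw [hCdef]; exact Finset.le_sup' (fun r'' => |f p r'' - f p s|) hr'mem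
          have hBge : -(C) ≤ f p r' - f p s := by
            have h1 := neg_abs_le (f p r' - f p s)
            linarith
          -- show f q s < f q r', contradicting r' ∈ γ q at s
          have hqs := (hmemγ _ r').1 hr'q s
          rw [hlin, hlin] at hqs
          -- hqs : (1-t) f p0 r' + t f p r' ≤ (1-t) f p0 s + t f p s
          have hgoal : (1 - t) * (f p0 r' - f p0 s) + t * (f p r' - f p s) > 0 := by
            have h1 : (1 - t) * (f p0 r' - f p0 s) ≥ (1 - t) * ε := by
              apply mul_le_mul_of_nonneg_left hεle (by linarith)
            have h2 : t * (f p r' - f p s) ≥ t * (-C) :=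
              mul_le_mul_of_nonneg_left hBge (le_of_lt ht0)
            have h3 : (1 - t) * ε - t * C > 0 := by nlinarith
            nlinarith
          nlinarith
      · -- bad empty: γ p0 = univ
        refine ⟨1/2, by norm_num, by norm_num, fun r' _ => ?_⟩
        by_contra hr'
        exact hbad ⟨r', Finset.mem_filter.2 ⟨Finset.mem_univ _, hr'⟩⟩
    obtain ⟨t, ht0, ht1, hsub⟩ := key
    set q : Fin n → ℝ := fun y => (1 - t) * p0 y + t * p y with hqdef
    have hqΓ : q ∈ Γlev u := hconvΓ p0 hp0Γ p hpΓ t (le_of_lt ht0) (le_of_lt ht1)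
    have hqcard : (γ p0).ncard ≤ (γ q).ncard := by
      rw [hp0k]
      exact Nat.sInf_le ⟨q, hqΓ, rfl⟩
    have hqeq : γ q = γ p0 :=
      Set.eq_of_subset_of_ncard_le hsub hqcard (Set.toFinite _)
    have hsq : s ∈ γ q := hqeq ▸ hs
    -- f p0 s = f p0 r
    have heq0 : f p0 s = f p0 r :=
      le_antisymm ((hmemγ p0 s).1 hs r) ((hmemγ p0 r).1 hrp0 s)
    have hqsr := (hmemγ q s).1 hsq r
    rw [hqdef] at hqsr
    rw [hlin, hlin] at hqsr
    have hps_r : f p s ≤ f p r := by nlinarith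
    rw [Set.mem_setOf_eq, hmemγ]
    intro r'
    exact le_trans hps_r ((hmemγ p r).1 hrp r')
end

section
/- Let L : ℝ^d → ℝ^n have convex, continuously differentiable components, and suppose Γ(p) = argmin_u ⟨p, L(u)⟩ is nonempty for every p ∈ Δ_n. Then the set Γ(Δ_n) = ∪_{p ∈ Δ_n} Γ(p) is closed in ℝ^d. -/
open Function

/-- The set is the projection, along the compact factor, of a closed subset of `K × X`. -/
theorem IsCompact.isClosed_setOf_exists_forall_le {P X α : Type*} [TopologicalSpace P]
    [TopologicalSpace X] [TopologicalSpace α] [Preorder α] [OrderClosedTopology α]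
    {K : Set P} (hK : IsCompact K) {f : P → X → α} (hf : Continuous (uncurry f)) :
    IsClosed {u | ∃ p ∈ K, ∀ v, f p u ≤ f p v} := by
  have : CompactSpace K := isCompact_iff_compactSpace.mp hK
  have hminimizers : IsClosed {x : K × X | ∀ v, f x.1 x.2 ≤ f x.1 v} := by
    simp only [Set.ofPred_forall]
    exact isClosed_iInter fun v =>
      isClosed_le (hf.comp (continuous_subtype_val.prodMap continuous_id))
        (hf.comp ((continuous_subtype_val.comp continuous_fst).prodMk continuous_const))
  convert isClosedMap_snd_of_compactSpace _ hminimizers using 1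
  ext u
  simp

theorem Gamma_image_closed_general (d n : ℕ)
    (L : EuclideanSpace ℝ (Fin d) → Fin n → ℝ)
    (hdiff : ∀ y, Differentiable ℝ (fun u => L u y)) :
    IsClosed {u : EuclideanSpace ℝ (Fin d) | ∃ p ∈ stdSimplex ℝ (Fin n),
      ∀ v, ∑ y, p y * L u y ≤ ∑ y, p y * L v y} := by
  have hL : ∀ y, Continuous fun u => L u y := fun y => (hdiff y).continuous
  exact (isCompact_stdSimplex ℝ (Fin n)).isClosed_setOf_exists_forall_le
    (f := fun p u => ∑ y, p y * L u y) (by fun_prop)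

/-- If L has convex differentiable components and Γ(p) is nonempty for every p ∈ Δ_n,
then the set of all surrogate minimizers Γ(Δ_n) is closed in ℝ^d. -/
theorem Gamma_image_closed (d n : ℕ)
    (L : EuclideanSpace ℝ (Fin d) → Fin n → ℝ)
    (hconv : ∀ y, ConvexOn ℝ Set.univ (fun u => L u y))
    (hdiff : ∀ y, Differentiable ℝ (fun u => L u y))
    (hne : ∀ p ∈ stdSimplex ℝ (Fin n),
      {u : EuclideanSpace ℝ (Fin d) | ∀ v, ∑ y, p y * L u y ≤ ∑ y, p y * L v y}.Nonempty) :
    IsClosed {u : EuclideanSpace ℝ (Fin d) | ∃ p ∈ stdSimplex ℝ (Fin n),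
      ∀ v, ∑ y, p y * L u y ≤ ∑ y, p y * L v y} :=
  Gamma_image_closed_general d n L hdiff
end
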